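/- Let n, m ≥ 1, let J ∈ ℝ^{n×n}, let λ ∈ ℝ be a simple eigenvalue of J with eigenvector v ≠ 0, Jv = λv, let V ∈ ℝ^{n×(n−1)} have rank n−1 with Vᵀv = 0, and set Z = V (Vᵀ(J − λI)V)⁻¹ Vᵀ. Let f₁,…,f_m ∈ ℝ and weights w₁,…,w_m ≥ 0. Consider the set S = { ‖Z (Σᵢ₌₁ᵐ fᵢ Eᵢ v)‖ / ‖v‖ : E₁,…,E_m ∈ ℝ^{n×n} with ‖Eᵢ‖₂ ≤ wᵢ for all i }. Then ‖Z‖₂ · (Σᵢ₌₁ᵐ |fᵢ| wᵢ) is the greatest element of S: every element of S is ≤ this value, and it is attained, e.g. by Eᵢ = sign(fᵢ) wᵢ p vᵀ/‖v‖ where p is a unit vector with ‖Zp‖ = ‖Z‖₂. -/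

import Mathlib

/-!
Since `‖Eᵢ v‖ ≤ wᵢ ‖v‖`, the triangle inequality bounds `‖Z Σᵢ fᵢ Eᵢ v‖` by
`‖Z‖₂ (Σᵢ |fᵢ| wᵢ) ‖v‖`. Equality holds as soon as every `fᵢ Eᵢ v` is a nonnegative multiple of a
single unit vector `p` on which `Z` attains its norm (such `p` exists by compactness of the unit
sphere), and the rank-one perturbations `Eᵢ = sign(fᵢ) wᵢ p vᵀ / ‖v‖` achieve exactly this.
-/

open Matrix

/-- Euclidean norm of a vector in `ℝⁿ`. -/
noncomputable def e2norm {n : ℕ} (v : Fin n → ℝ) : ℝ := Real.sqrt (∑ i, v i ^ 2)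

/-- Frobenius norm of a real matrix. -/
noncomputable def frobNorm {n m : ℕ} (M : Matrix (Fin n) (Fin m) ℝ) : ℝ :=
  Real.sqrt (∑ i, ∑ j, M i j ^ 2)

/-- Spectral norm: the supremum of `‖M x‖` over Euclidean-unit vectors `x`. -/
noncomputable def specNorm {n m : ℕ} (M : Matrix (Fin n) (Fin m) ℝ) : ℝ :=
  sSup ((fun x => e2norm (M.mulVec x)) '' {x : Fin m → ℝ | e2norm x = 1})

open Metric
open scoped Matrix.Norms.L2Operator

theorem ContinuousLinearMap.exists_mem_sphere_norm_apply_eq_opNorm {E F : Type*}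
    [NormedAddCommGroup E] [NormedSpace ℝ E] [FiniteDimensional ℝ E] [Nontrivial E]
    [SeminormedAddCommGroup F] [NormedSpace ℝ F] (A : E →L[ℝ] F) :
    ∃ x ∈ sphere (0 : E) 1, ‖A x‖ = ‖A‖ := by
  obtain ⟨x, hx, hmax⟩ := (isCompact_sphere (0 : E) 1).exists_isMaxOn
    (NormedSpace.sphere_nonempty.2 zero_le_one) (continuous_norm.comp A.continuous).continuousOn
  refine ⟨x, hx, ?_⟩
  rw [← A.sSup_sphere_eq_norm]
  exact (IsGreatest.csSup_eq ⟨Set.mem_image_of_mem _ hx, by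
    rintro _ ⟨y, hy, rfl⟩; exact isMaxOn_iff.1 hmax y hy⟩).symm

section Norms

variable {k n l : ℕ}

theorem e2norm_eq_norm_toLp (x : Fin n → ℝ) : e2norm x = ‖WithLp.toLp 2 x‖ := by
  simp [e2norm, EuclideanSpace.norm_eq]

theorem e2norm_nonneg (x : Fin n → ℝ) : 0 ≤ e2norm x := Real.sqrt_nonneg _

theorem e2norm_pos {x : Fin n → ℝ} (hx : x ≠ 0) : 0 < e2norm x := by
  simp [e2norm_eq_norm_toLp, hx]

theorem e2norm_smul (c : ℝ) (x : Fin n → ℝ) : e2norm (c • x) = |c| * e2norm x := by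
  simp [e2norm_eq_norm_toLp, norm_smul]

theorem dotProduct_self_eq_e2norm_sq (x : Fin n → ℝ) : x ⬝ᵥ x = e2norm x ^ 2 := by
  rw [e2norm, Real.sq_sqrt (by positivity)]
  simp [dotProduct, sq]

theorem specNorm_eq_l2_opNorm (M : Matrix (Fin k) (Fin n) ℝ) : specNorm M = ‖M‖ := by
  rw [l2_opNorm_def, ← ContinuousLinearMap.sSup_sphere_eq_norm, specNorm]
  congr 1
  ext s
  constructor
  · rintro ⟨x, hx, rfl⟩
    exact ⟨WithLp.toLp 2 x, by simpa [e2norm_eq_norm_toLp] using hx,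
      by simp [e2norm_eq_norm_toLp]⟩
  · rintro ⟨x, hx, rfl⟩
    exact ⟨x.ofLp, by simpa [e2norm_eq_norm_toLp] using hx,
      by simp [e2norm_eq_norm_toLp, toLpLin_apply]⟩

theorem specNorm_nonneg (M : Matrix (Fin k) (Fin n) ℝ) : 0 ≤ specNorm M := by
  simp [specNorm_eq_l2_opNorm]

theorem specNorm_smul (c : ℝ) (M : Matrix (Fin k) (Fin n) ℝ) :
    specNorm (c • M) = |c| * specNorm M := by
  simp [specNorm_eq_l2_opNorm, norm_smul]

theorem e2norm_mulVec_le (M : Matrix (Fin k) (Fin n) ℝ) (x : Fin n → ℝ) :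
    e2norm (M *ᵥ x) ≤ specNorm M * e2norm x := by
  simpa [specNorm_eq_l2_opNorm, e2norm_eq_norm_toLp] using M.l2_opNorm_mulVec (WithLp.toLp 2 x)

theorem exists_e2norm_eq_one_e2norm_mulVec_eq_specNorm [NeZero n]
    (M : Matrix (Fin k) (Fin n) ℝ) : ∃ p, e2norm p = 1 ∧ e2norm (M *ᵥ p) = specNorm M := by
  obtain ⟨x, hx, hmax⟩ :=
    ((toEuclideanLin (𝕜 := ℝ) (m := Fin k) (n := Fin n)).trans
      LinearMap.toContinuousLinearMap M).exists_mem_sphere_norm_apply_eq_opNorm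
  refine ⟨x.ofLp, by simpa [e2norm_eq_norm_toLp] using hx, ?_⟩
  simpa [e2norm_eq_norm_toLp, specNorm_eq_l2_opNorm, l2_opNorm_def, toLpLin_apply] using hmax

theorem specNorm_vecMulVec_le (p : Fin k → ℝ) (v : Fin n → ℝ) :
    specNorm (vecMulVec p v) ≤ e2norm p * e2norm v := by
  rw [specNorm_eq_l2_opNorm, l2_opNorm_def]
  refine ContinuousLinearMap.opNorm_le_bound _ (by simp [e2norm_eq_norm_toLp]; positivity)
    fun x => ?_
  simp only [LinearEquiv.trans_apply, LinearMap.coe_toContinuousLinearMap', toLpLin_apply,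
    vecMulVec_mulVec, e2norm_eq_norm_toLp]
  have hdot : |v ⬝ᵥ x.ofLp| ≤ ‖x‖ * ‖WithLp.toLp 2 v‖ := by
    simpa [EuclideanSpace.inner_eq_star_dotProduct] using
      abs_real_inner_le_norm x (WithLp.toLp 2 v)
  rw [op_smul_eq_smul, WithLp.toLp_smul, norm_smul, Real.norm_eq_abs, mul_comm, mul_assoc,
    mul_comm ‖WithLp.toLp 2 v‖]
  gcongr

end Norms

section Perturbation

variable {ι : Type*} {k n l : ℕ}

noncomputable def extremalPerturbation (f w : ι → ℝ) (p : Fin n → ℝ) (v : Fin l → ℝ) (i : ι) :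
    Matrix (Fin n) (Fin l) ℝ :=
  (SignType.sign (f i) * w i / e2norm v) • vecMulVec p v

theorem specNorm_extremalPerturbation_le (f : ι → ℝ) {w : ι → ℝ} (hw : ∀ i, 0 ≤ w i)
    {p : Fin n → ℝ} (hp : e2norm p = 1) {v : Fin l → ℝ} (hv : v ≠ 0) (i : ι) :
    specNorm (extremalPerturbation f w p v i) ≤ w i := by
  have hv₀ := e2norm_pos hv
  have hsign : |(SignType.sign (f i) : ℝ)| ≤ 1 := by
    rcases lt_trichotomy (f i) 0 with h | h | h <;> simp [h]
  calc specNorm (extremalPerturbation f w p v i)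
      ≤ |SignType.sign (f i) * w i / e2norm v| * (e2norm p * e2norm v) := by
        rw [extremalPerturbation, specNorm_smul]
        gcongr
        exact specNorm_vecMulVec_le p v
    _ ≤ w i := by
        rw [hp, one_mul, abs_div, abs_mul, abs_of_pos hv₀, abs_of_nonneg (hw i),
          div_mul_cancel₀ _ hv₀.ne']
        exact mul_le_of_le_one_left (hw i) hsign

variable [Fintype ι]

theorem e2norm_sum_smul_mulVec_le (f w : ι → ℝ) (E : ι → Matrix (Fin n) (Fin l) ℝ)
    (hE : ∀ i, specNorm (E i) ≤ w i) (v : Fin l → ℝ) :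
    e2norm (∑ i, f i • E i *ᵥ v) ≤ (∑ i, |f i| * w i) * e2norm v := by
  simp only [e2norm_eq_norm_toLp, WithLp.toLp_sum, WithLp.toLp_smul, Finset.sum_mul]
  refine (norm_sum_le _ _).trans (Finset.sum_le_sum fun i _ => ?_)
  rw [norm_smul, Real.norm_eq_abs, mul_assoc, ← e2norm_eq_norm_toLp, ← e2norm_eq_norm_toLp]
  gcongr
  exact (e2norm_mulVec_le _ _).trans (mul_le_mul_of_nonneg_right (hE i) (e2norm_nonneg v))

theorem sum_smul_extremalPerturbation_mulVec (f w : ι → ℝ) (p : Fin n → ℝ) {v : Fin l → ℝ}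
    (hv : v ≠ 0) :
    ∑ i, f i • extremalPerturbation f w p v i *ᵥ v = ((∑ i, |f i| * w i) * e2norm v) • p := by
  have hv₀ := e2norm_pos hv
  simp only [extremalPerturbation, smul_mulVec, vecMulVec_mulVec, dotProduct_self_eq_e2norm_sq,
    Finset.sum_mul, Finset.sum_smul, smul_smul]
  refine Finset.sum_congr rfl fun i _ => ?_
  rw [op_smul_eq_smul, smul_smul, ← self_mul_sign (f i)]
  congr 1
  field_simp

theorem isGreatest_e2norm_mulVec_sum_smul_mulVec_div (Z : Matrix (Fin k) (Fin n) ℝ)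
    {v : Fin n → ℝ} (hv : v ≠ 0) (f : ι → ℝ) {w : ι → ℝ} (hw : ∀ i, 0 ≤ w i) :
    IsGreatest
      {s : ℝ | ∃ E : ι → Matrix (Fin n) (Fin n) ℝ,
        (∀ i, specNorm (E i) ≤ w i) ∧ s = e2norm (Z *ᵥ ∑ i, f i • E i *ᵥ v) / e2norm v}
      (specNorm Z * ∑ i, |f i| * w i) := by
  have hv₀ := e2norm_pos hv
  have : NeZero n := ⟨by rintro rfl; exact hv (Subsingleton.elim _ _)⟩
  obtain ⟨p, hp, hZp⟩ := exists_e2norm_eq_one_e2norm_mulVec_eq_specNorm Z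
  refine ⟨⟨extremalPerturbation f w p v, specNorm_extremalPerturbation_le f hw hp hv, ?_⟩, ?_⟩
  · have hfw : 0 ≤ ∑ i, |f i| * w i :=
      Finset.sum_nonneg fun i _ => mul_nonneg (abs_nonneg _) (hw i)
    rw [sum_smul_extremalPerturbation_mulVec f w p hv, mulVec_smul, e2norm_smul, hZp,
      abs_of_nonneg (mul_nonneg hfw hv₀.le)]
    field_simp
  · rintro _ ⟨E, hE, rfl⟩
    rw [div_le_iff₀ hv₀, mul_assoc]
    exact (e2norm_mulVec_le _ _).trans
      (mul_le_mul_of_nonneg_left (e2norm_sum_smul_mulVec_le f w E hE v) (specNorm_nonneg Z))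

end Perturbation

theorem eigenvector_condition_number_general
    {n m : ℕ}
    (J : Matrix (Fin n) (Fin n) ℝ) (lam : ℝ)
    (v : Fin n → ℝ) (hv : v ≠ 0)
    (V : Matrix (Fin n) (Fin (n - 1)) ℝ)
    (f w : Fin m → ℝ) (hw : ∀ i, 0 ≤ w i) :
    IsGreatest
      {s : ℝ | ∃ E : Fin m → Matrix (Fin n) (Fin n) ℝ,
        (∀ i, specNorm (E i) ≤ w i) ∧
        s = e2norm ((V * (Vᵀ * (J - lam • 1) * V)⁻¹ * Vᵀ).mulVec
              (∑ i, f i • (E i).mulVec v)) / e2norm v}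
      (specNorm (V * (Vᵀ * (J - lam • 1) * V)⁻¹ * Vᵀ) * ∑ i, |f i| * w i) :=
  isGreatest_e2norm_mulVec_sum_smul_mulVec_div _ hv f hw

/-- the eigenvector condition number. With
`Z = V (Vᵀ(J-λI)V)⁻¹ Vᵀ`, the greatest value of
`‖Z Σᵢ fᵢ Eᵢ v‖ / ‖v‖` over `‖Eᵢ‖₂ ≤ wᵢ` equals `‖Z‖₂ Σᵢ |fᵢ| wᵢ`. -/
theorem eigenvector_condition_number
    {n m : ℕ} (hn : 1 ≤ n) (hm : 1 ≤ m)
    (J : Matrix (Fin n) (Fin n) ℝ) (lam : ℝ)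
    (hsimple : Polynomial.rootMultiplicity lam J.charpoly = 1)
    (v : Fin n → ℝ) (hv : v ≠ 0) (heig : J.mulVec v = lam • v)
    (V : Matrix (Fin n) (Fin (n - 1)) ℝ)
    (hrank : V.rank = n - 1) (hVv : Vᵀ.mulVec v = 0)
    (f w : Fin m → ℝ) (hw : ∀ i, 0 ≤ w i) :
    IsGreatest
      {s : ℝ | ∃ E : Fin m → Matrix (Fin n) (Fin n) ℝ,
        (∀ i, specNorm (E i) ≤ w i) ∧
        s = e2norm ((V * (Vᵀ * (J - lam • 1) * V)⁻¹ * Vᵀ).mulVec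
              (∑ i, f i • (E i).mulVec v)) / e2norm v}
      (specNorm (V * (Vᵀ * (J - lam • 1) * V)⁻¹ * Vᵀ) * ∑ i, |f i| * w i) :=
  eigenvector_condition_number_general J lam v hv V f w hw
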